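/- Let β, γ, c ∈ ℝ with γ ≠ 0, c ≠ 0, β·γ ≠ 1. On the open set U = {(x,y,z,p,q) ∈ ℝ⁵ : q ≠ 0 and y ≠ 1/γ}, define the SL(2) Pfaffian system θ₁ = (dy + y dz) − y²(dp − p dz) − (β/q)·((dq + q dz) − q²(dx − x dz)), θ₂ = (p dz − dp) + γ·q·(dx − x dz), θ₃ = 2y(dp − p dz) + (1/q) dq − 2q(dx − x dz), and define Φ : U → ℝ⁵ by Φ(x,y,z,p,q) = (−1/(γq), −c·exp(−z)·(x − p/(γq)), −(1/c)·exp(z)·(y − β), −c·exp(−z)·p, c·γ·q/(2·exp(z)·(y − 1/γ))). On ℝ⁵ with coordinates (X,Y,Z,P,Q), define ω₁ = dY − P dX, ω₂ = dP − Q dX, ω₃ = dZ − F dX, where F(X,Y,Z,P,Q) = Q·Z² + (β·γ/(1 − β·γ))·(Q·Z² − Z/X + 1/(4·Q·X²)). Then for every a ∈ U and every v ∈ ℝ⁵: θ₁(a)(v) = 0 and θ₂(a)(v) = 0 and θ₃(a)(v) = 0 if and only if ω₁(Φ(a))((fderiv ℝ Φ a)(v)) = 0 and ω₂(Φ(a))((fderiv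 ℝ Φ a)(v)) = 0 and ω₃(Φ(a))((fderiv ℝ Φ a)(v)) = 0. (Theorem: the SL(2) Pfaffian system can be brought to the Monge normal form dz = q z² + (βγ/(1−βγ))(√q z − 1/(2√q x))² by an explicit change of coordinates.) -/

import Mathlib

/-!
The differential of `Φ` expresses each pulled-back Monge form as a combination of the `θᵢ` with a
triangular coefficient matrix: `Φ^*ω₁` is a multiple of `θ₂`, `Φ^*ω₂` a combination of `θ₂` and
`θ₃`, and `Φ^*ω₃ = -(e^z / c) θ₁ + (terms in θ₂, θ₃)`. On `U` the diagonal coefficients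
`-c / (e^z γ q)`, `-c / (2 e^z (y - 1/γ))` and `-e^z / c` do not vanish, so the two systems have
the same kernel at every point.
-/

noncomputable section

open Real

/-- coordinate differentials on ℝ⁵ -/
def dc (i : Fin 5) : (Fin 5 → ℝ) →L[ℝ] ℝ := ContinuousLinearMap.proj i

/-- θ₁ = (dy + y dz) − y²(dp − p dz) − (β/q)((dq + q dz) − q²(dx − x dz)) -/
def θ₁ (β : ℝ) : (Fin 5 → ℝ) → ((Fin 5 → ℝ) →L[ℝ] ℝ) :=
  fun a => (dc 1 + a 1 • dc 2) - (a 1)^2 • (dc 3 - a 3 • dc 2)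
    - (β / a 4) • ((dc 4 + a 4 • dc 2) - (a 4)^2 • (dc 0 - a 0 • dc 2))

/-- θ₂ = (p dz − dp) + γq(dx − x dz) -/
def θ₂ (γ : ℝ) : (Fin 5 → ℝ) → ((Fin 5 → ℝ) →L[ℝ] ℝ) :=
  fun a => (a 3 • dc 2 - dc 3) + (γ * a 4) • (dc 0 - a 0 • dc 2)

/-- θ₃ = 2y(dp − p dz) + (1/q)dq − 2q(dx − x dz) -/
def θ₃ : (Fin 5 → ℝ) → ((Fin 5 → ℝ) →L[ℝ] ℝ) :=
  fun a => (2 * a 1) • (dc 3 - a 3 • dc 2) + (1 / a 4) • dc 4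
    - (2 * a 4) • (dc 0 - a 0 • dc 2)

/-- the change of coordinates Φ -/
def Φ (β γ c : ℝ) : (Fin 5 → ℝ) → (Fin 5 → ℝ) :=
  fun a => ![-(1/(γ * a 4)),
             -(c * exp (-(a 2)) * (a 0 - a 3 / (γ * a 4))),
             -((1/c) * exp (a 2) * (a 1 - β)),
             -(c * exp (-(a 2)) * a 3),
             c * γ * a 4 / (2 * exp (a 2) * (a 1 - 1/γ))]

/-- F(X,Y,Z,P,Q) = QZ² + (βγ/(1−βγ))(QZ² − Z/X + 1/(4QX²)) -/
def F (β γ : ℝ) (b : Fin 5 → ℝ) : ℝ :=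
  b 4 * (b 2)^2 + (β * γ / (1 - β * γ)) *
    (b 4 * (b 2)^2 - b 2 / b 0 + 1/(4 * b 4 * (b 0)^2))

/-- ω₁ = dY − P dX -/
def ω₁ : (Fin 5 → ℝ) → ((Fin 5 → ℝ) →L[ℝ] ℝ) := fun b => dc 1 - b 3 • dc 0

/-- ω₂ = dP − Q dX -/
def ω₂ : (Fin 5 → ℝ) → ((Fin 5 → ℝ) →L[ℝ] ℝ) := fun b => dc 3 - b 4 • dc 0

/-- ω₃ = dZ − F dX -/
def ω₃ (β γ : ℝ) : (Fin 5 → ℝ) → ((Fin 5 → ℝ) →L[ℝ] ℝ) :=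
  fun b => dc 2 - F β γ b • dc 0

theorem HasFDerivAt.fun_inv {𝕜 E : Type*} [NontriviallyNormedField 𝕜] [NormedAddCommGroup E]
    [NormedSpace 𝕜 E] {f : E → 𝕜} {f' : E →L[𝕜] 𝕜} {a : E}
    (hf : HasFDerivAt f f' a) (ha : f a ≠ 0) :
    HasFDerivAt (fun x => (f x)⁻¹) (-(f a ^ 2)⁻¹ • f') a := by
  simpa [Function.comp_def] using (hasDerivAt_inv ha).comp_hasFDerivAt a hf

theorem triangular_system_eq_zero_iff {R : Type*} [Semiring R] [NoZeroDivisors R]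
    {t₁ t₂ t₃ w₁ w₂ w₃ a₂ b₂ b₃ c₁ c₂ c₃ : R} (h₁ : w₁ = a₂ * t₂) (h₂ : w₂ = b₂ * t₂ + b₃ * t₃)
    (h₃ : w₃ = c₁ * t₁ + c₂ * t₂ + c₃ * t₃) (ha₂ : a₂ ≠ 0) (hb₃ : b₃ ≠ 0) (hc₁ : c₁ ≠ 0) :
    (t₁ = 0 ∧ t₂ = 0 ∧ t₃ = 0) ↔ (w₁ = 0 ∧ w₂ = 0 ∧ w₃ = 0) := by
  subst h₁ h₂ h₃
  constructor
  · rintro ⟨rfl, rfl, rfl⟩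
    simp
  · rintro ⟨hw₁, hw₂, hw₃⟩
    have ht₂ : t₂ = 0 := (mul_eq_zero.mp hw₁).resolve_left ha₂
    have ht₃ : t₃ = 0 := by simpa [ht₂, hb₃] using hw₂
    have ht₁ : t₁ = 0 := by simpa [ht₂, ht₃, hc₁] using hw₃
    exact ⟨ht₁, ht₂, ht₃⟩

def dΦ (β γ c : ℝ) (a : Fin 5 → ℝ) : Fin 5 → (Fin 5 → ℝ) →L[ℝ] ℝ :=
  ![(γ * a 4 ^ 2)⁻¹ • dc 4,
    (c * exp (-a 2)) • ((a 0 - a 3 / (γ * a 4)) • dc 2 - dc 0 + (γ * a 4)⁻¹ • dc 3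
      - (a 3 / (γ * a 4 ^ 2)) • dc 4),
    -(exp (a 2) / c) • ((a 1 - β) • dc 2 + dc 1),
    (c * exp (-a 2)) • (a 3 • dc 2 - dc 3),
    (c * γ / (2 * exp (a 2) * (a 1 - 1 / γ))) • (dc 4 - a 4 • dc 2 - (a 4 / (a 1 - 1 / γ)) • dc 1)]

section

variable {β γ c : ℝ} {a : Fin 5 → ℝ}

theorem hasFDerivAt_Φ_zero (hγ : γ ≠ 0) (hq : a 4 ≠ 0) :
    HasFDerivAt (fun x => Φ β γ c x 0) (dΦ β γ c a 0) a := by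
  have h := (((hasFDerivAt_apply (𝕜 := ℝ) 4 a).const_mul γ).fun_inv (mul_ne_zero hγ hq)).neg
  refine (h.congr_of_eventuallyEq (.of_forall fun x => ?_)).congr_fderiv ?_
  · simp [Φ]
  · ext v
    simp only [dΦ, dc, neg_apply, smul_apply, ContinuousLinearMap.proj_apply, smul_eq_mul,
      Matrix.cons_val]
    field_simp

theorem hasFDerivAt_Φ_one (hγ : γ ≠ 0) (hq : a 4 ≠ 0) :
    HasFDerivAt (fun x => Φ β γ c x 1) (dΦ β γ c a 1) a := by
  have h := ((((hasFDerivAt_apply (𝕜 := ℝ) 2 a).neg.exp).const_mul c).mul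
      ((hasFDerivAt_apply (𝕜 := ℝ) 0 a).sub
        ((hasFDerivAt_apply (𝕜 := ℝ) 3 a).mul
          (((hasFDerivAt_apply (𝕜 := ℝ) 4 a).const_mul γ).fun_inv (mul_ne_zero hγ hq))))).neg
  refine (h.congr_of_eventuallyEq (.of_forall fun x => ?_)).congr_fderiv ?_
  · simp [Φ, div_eq_mul_inv]
  · ext v
    simp only [dΦ, dc, add_apply, sub_apply, neg_apply, smul_apply,
      ContinuousLinearMap.proj_apply, smul_eq_mul, Pi.neg_apply, Pi.sub_apply, Pi.mul_apply,
      Matrix.cons_val]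
    field_simp
    ring

theorem hasFDerivAt_Φ_two : HasFDerivAt (fun x => Φ β γ c x 2) (dΦ β γ c a 2) a := by
  have h := ((((hasFDerivAt_apply (𝕜 := ℝ) 2 a).exp).const_mul (1 / c)).mul
      ((hasFDerivAt_apply (𝕜 := ℝ) 1 a).sub_const β)).neg
  refine (h.congr_of_eventuallyEq (.of_forall fun x => ?_)).congr_fderiv ?_
  · simp [Φ]
  · ext v
    simp only [dΦ, dc, add_apply, neg_apply, smul_apply, ContinuousLinearMap.proj_apply,
      smul_eq_mul, Matrix.cons_val]
    ring

theorem hasFDerivAt_Φ_three : HasFDerivAt (fun x => Φ β γ c x 3) (dΦ β γ c a 3) a := by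
  have h := ((((hasFDerivAt_apply (𝕜 := ℝ) 2 a).neg.exp).const_mul c).mul
      (hasFDerivAt_apply (𝕜 := ℝ) 3 a)).neg
  refine (h.congr_of_eventuallyEq (.of_forall fun x => ?_)).congr_fderiv ?_
  · simp [Φ]
  · ext v
    simp only [dΦ, dc, add_apply, sub_apply, neg_apply, smul_apply,
      ContinuousLinearMap.proj_apply, smul_eq_mul, Pi.neg_apply, Matrix.cons_val]
    ring

theorem hasFDerivAt_Φ_four (hy : a 1 ≠ 1 / γ) :
    HasFDerivAt (fun x => Φ β γ c x 4) (dΦ β γ c a 4) a := by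
  have hden : 2 * exp (a 2) * (a 1 - 1 / γ) ≠ 0 :=
    mul_ne_zero (mul_ne_zero two_ne_zero (exp_ne_zero _)) (sub_ne_zero.mpr hy)
  have h := ((hasFDerivAt_apply (𝕜 := ℝ) 4 a).const_mul (c * γ)).mul
      (((((hasFDerivAt_apply (𝕜 := ℝ) 2 a).exp).const_mul 2).mul
        ((hasFDerivAt_apply (𝕜 := ℝ) 1 a).sub_const (1 / γ))).fun_inv hden)
  refine (h.congr_of_eventuallyEq (.of_forall fun x => ?_)).congr_fderiv ?_
  · simp [Φ, div_eq_mul_inv]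
  · ext v
    simp only [dΦ, dc, add_apply, sub_apply, smul_apply, ContinuousLinearMap.proj_apply,
      smul_eq_mul, Pi.mul_apply, Matrix.cons_val]
    field_simp
    ring

theorem hasFDerivAt_Φ (hγ : γ ≠ 0) (hq : a 4 ≠ 0) (hy : a 1 ≠ 1 / γ) :
    HasFDerivAt (Φ β γ c) (ContinuousLinearMap.pi (dΦ β γ c a)) a := by
  refine hasFDerivAt_pi'' fun i => ?_
  rw [ContinuousLinearMap.proj_pi]
  fin_cases i
  exacts [hasFDerivAt_Φ_zero hγ hq, hasFDerivAt_Φ_one hγ hq, hasFDerivAt_Φ_two,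
    hasFDerivAt_Φ_three, hasFDerivAt_Φ_four hy]

theorem ω₁_apply_fderiv_Φ (hγ : γ ≠ 0) (hq : a 4 ≠ 0) (hy : a 1 ≠ 1 / γ) (v : Fin 5 → ℝ) :
    ω₁ (Φ β γ c a) (fderiv ℝ (Φ β γ c) a v) = -(c / (exp (a 2) * γ * a 4)) * θ₂ γ a v := by
  simp only [(hasFDerivAt_Φ hγ hq hy).fderiv, ω₁, θ₂, Φ, dΦ, dc, exp_neg,
    ContinuousLinearMap.pi_apply, add_apply, sub_apply, smul_apply,
    ContinuousLinearMap.proj_apply, smul_eq_mul, Matrix.cons_val]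
  field_simp
  ring

theorem ω₂_apply_fderiv_Φ (hγ : γ ≠ 0) (hq : a 4 ≠ 0) (hy : a 1 ≠ 1 / γ) (v : Fin 5 → ℝ) :
    ω₂ (Φ β γ c a) (fderiv ℝ (Φ β γ c) a v) =
      -(c / (exp (a 2) * γ * (a 1 - 1 / γ))) * θ₂ γ a v
        + -(c / (2 * exp (a 2) * (a 1 - 1 / γ))) * θ₃ a v := by
  have hy' : γ * a 1 - 1 ≠ 0 := by contrapose! hy; field_simp; linarith
  simp only [(hasFDerivAt_Φ hγ hq hy).fderiv, ω₂, θ₂, θ₃, Φ, dΦ, dc, exp_neg,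
    ContinuousLinearMap.pi_apply, add_apply, sub_apply, smul_apply,
    ContinuousLinearMap.proj_apply, smul_eq_mul, Matrix.cons_val]
  field_simp
  ring

theorem ω₃_apply_fderiv_Φ (hγ : γ ≠ 0) (hc : c ≠ 0) (hβγ : β * γ ≠ 1) (hq : a 4 ≠ 0)
    (hy : a 1 ≠ 1 / γ) (v : Fin 5 → ℝ) :
    ω₃ β γ (Φ β γ c a) (fderiv ℝ (Φ β γ c) a v) =
      -(exp (a 2) / c) * θ₁ β a v
        + -(exp (a 2) / c * (a 1 * (a 1 - β) / (γ * (a 1 - 1 / γ)))) * θ₂ γ a v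
        + -(exp (a 2) / c * ((a 1 ^ 2 - β / γ) / (2 * (a 1 - 1 / γ)))) * θ₃ a v := by
  have hy' : a 1 * γ - 1 ≠ 0 := by contrapose! hy; field_simp; linarith
  have hβγ' : 1 - β * γ ≠ 0 := sub_ne_zero.mpr hβγ.symm
  simp only [(hasFDerivAt_Φ hγ hq hy).fderiv, ω₃, F, θ₁, θ₂, θ₃, Φ, dΦ, dc, exp_neg,
    ContinuousLinearMap.pi_apply, add_apply, sub_apply, smul_apply,
    ContinuousLinearMap.proj_apply, smul_eq_mul, Matrix.cons_val]
  field_simp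
  ring

end

theorem sl2_pfaffian_to_monge_normal_form (β γ c : ℝ)
    (hγ : γ ≠ 0) (hc : c ≠ 0) (hβγ : β * γ ≠ 1) :
    ∀ a : Fin 5 → ℝ, a 4 ≠ 0 → a 1 ≠ 1/γ → ∀ v : Fin 5 → ℝ,
      (θ₁ β a v = 0 ∧ θ₂ γ a v = 0 ∧ θ₃ a v = 0) ↔
      (ω₁ (Φ β γ c a) (fderiv ℝ (Φ β γ c) a v) = 0 ∧
       ω₂ (Φ β γ c a) (fderiv ℝ (Φ β γ c) a v) = 0 ∧
       ω₃ β γ (Φ β γ c a) (fderiv ℝ (Φ β γ c) a v) = 0) := by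
  intro a hq hy v
  have he : exp (a 2) ≠ 0 := exp_ne_zero _
  refine triangular_system_eq_zero_iff (ω₁_apply_fderiv_Φ hγ hq hy v) (ω₂_apply_fderiv_Φ hγ hq hy v)
    (ω₃_apply_fderiv_Φ hγ hc hβγ hq hy v) ?_ ?_ ?_
  · exact neg_ne_zero.mpr (div_ne_zero hc (mul_ne_zero (mul_ne_zero he hγ) hq))
  · exact neg_ne_zero.mpr (div_ne_zero hc (mul_ne_zero (mul_ne_zero two_ne_zero he)
      (sub_ne_zero.mpr hy)))
  · exact neg_ne_zero.mpr (div_ne_zero he hc)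

end
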